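/- arXiv:2103.09740 — 5 statements merged into one kernel-verified Lean document; each statement's English description precedes it below -/
import Mathlib

section
/- Let κ > 0 and let g be a finite Borel measure on ℝ³ with M := ∫_{ℝ³} |v|^{6+κ} dg(v) < ∞. For all R₀ > 0 and T > 0 there exists a constant C > 0 (depending only on R₀, T, κ, g(ℝ³) and M) such that for every integer j ≥ 1, every x ∈ ℝ³ with |x| ≤ R₀, and all τ₁, τ₂ ∈ [0,T]: ∫_{{y ∈ ℝ³ : 2^{j−1} < |y| ≤ 2^{j}}} ∫_{ℝ³} (1 + |x − y − v·τ₁|²)^{-1} (1 + |x − y − v·τ₂|²)^{-1} dg(v) dy ≤ C (2^{-j} + 2^{-κj/2}). -/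
/-!
The annulus has volume `O(2^{3j})`. Once `2^j ≥ 8 R₀`, split the velocity integral at
`|v| = 2^j / (8T)`: for slower velocities both points `x - y - τᵢ v` stay at distance `≥ 2^j / 4`
from the origin, so the integrand is `O(2^{-4j})`; the faster velocities carry `g`-mass
`O(2^{-(6+κ) j})` by Markov's inequality for the moment of order `6 + κ`, while the integrand is
at most `1`. This gives `O(2^{-j} + 2^{-(3+κ) j})`. The annuli with `2^j < 8 R₀` are bounded by
`g(ℝ³)` times their volume, which is absorbed into the constant.
-/

open MeasureTheory Metric Set

lemma le_norm_sub_sub_of_le {E : Type*} [SeminormedAddCommGroup E] {x y w : E} {a : ℝ}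
    (hx : ‖x‖ ≤ a / 8) (hy : a / 2 < ‖y‖) (hw : ‖w‖ ≤ a / 8) : a / 4 ≤ ‖x - y - w‖ := by
  have : ‖y‖ ≤ ‖x‖ + ‖x - y - w‖ + ‖w‖ :=
    calc ‖y‖ = ‖x - (x - y - w) - w‖ := by congr 1; abel
      _ ≤ ‖x‖ + ‖x - y - w‖ + ‖w‖ := (norm_sub_le _ _).trans (by gcongr; exact norm_sub_le _ _)
  linarith

lemma inv_one_add_sq_le_one (t : ℝ) : (1 + t ^ 2)⁻¹ ≤ 1 :=
  inv_le_one_of_one_le₀ (le_add_of_nonneg_right (sq_nonneg t))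

lemma inv_one_add_sq_mul_inv_one_add_sq_le_one (s t : ℝ) : (1 + s ^ 2)⁻¹ * (1 + t ^ 2)⁻¹ ≤ 1 :=
  mul_le_one₀ (inv_one_add_sq_le_one s) (by positivity) (inv_one_add_sq_le_one t)

lemma inv_one_add_sq_le_inv_sq {b t : ℝ} (hb : 0 < b) (hbt : b ≤ t) :
    (1 + t ^ 2)⁻¹ ≤ (b ^ 2)⁻¹ :=
  inv_anti₀ (by positivity) (by nlinarith)

lemma lintegral_le_mul_measure_univ_add_measure_compl {α : Type*} [MeasurableSpace α]
    (μ : Measure α) {f : α → ENNReal} {s : Set α} {c : ENNReal} (hf : ∀ v, f v ≤ 1)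
    (hfs : ∀ v ∈ s, f v ≤ c) : ∫⁻ v, f v ∂μ ≤ c * μ univ + μ sᶜ :=
  calc ∫⁻ v, f v ∂μ ≤ ∫⁻ v, c + sᶜ.indicator 1 v ∂μ := lintegral_mono fun v => by
        by_cases hv : v ∈ s
        · simpa [hv] using hfs v hv
        · simpa [hv] using (hf v).trans (le_add_self : 1 ≤ c + 1)
    _ ≤ c * μ univ + μ sᶜ := by
        rw [lintegral_add_left measurable_const, lintegral_const]
        gcongr
        exact lintegral_indicator_one_le _

lemma measure_compl_closedBall_le_of_lintegral_rpow_le {E : Type*} [NormedAddCommGroup E]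
    [MeasurableSpace E] [OpensMeasurableSpace E] (μ : Measure E) {p r M : ℝ} (hp : 0 ≤ p)
    (hr : 0 < r) (hM : ∫⁻ v, ENNReal.ofReal (‖v‖ ^ p) ∂μ ≤ ENNReal.ofReal M) :
    μ (closedBall 0 r)ᶜ ≤ ENNReal.ofReal (M / r ^ p) := by
  have hrp : 0 < r ^ p := Real.rpow_pos_of_pos hr p
  calc μ (closedBall 0 r)ᶜ
      ≤ μ {v | ENNReal.ofReal (r ^ p) ≤ ENNReal.ofReal (‖v‖ ^ p)} := by
        refine measure_mono fun v hv => ?_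
        have : r < ‖v‖ := by simpa using hv
        exact ENNReal.ofReal_le_ofReal (Real.rpow_le_rpow hr.le this.le hp)
    _ ≤ (∫⁻ v, ENNReal.ofReal (‖v‖ ^ p) ∂μ) / ENNReal.ofReal (r ^ p) :=
        meas_ge_le_lintegral_div (by fun_prop) (by simpa using hrp) ENNReal.ofReal_ne_top
    _ ≤ ENNReal.ofReal (M / r ^ p) := by
        rw [ENNReal.ofReal_div_of_pos hrp]
        gcongr

lemma setLIntegral_annulus_le {E : Type*} [NormedAddCommGroup E] [NormedSpace ℝ E]
    [MeasurableSpace E] [BorelSpace E] [FiniteDimensional ℝ E] (μ : Measure E)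
    [μ.IsAddHaarMeasure] {f : E → ENNReal} {r R : ℝ} {c : ENNReal} (hR : 0 ≤ R)
    (hf : ∀ y, r < ‖y‖ → f y ≤ c) :
    ∫⁻ y in {y | r < ‖y‖ ∧ ‖y‖ ≤ R}, f y ∂μ
      ≤ c * (ENNReal.ofReal (R ^ Module.finrank ℝ E) * μ (closedBall 0 1)) := by
  have hA : MeasurableSet {y : E | r < ‖y‖ ∧ ‖y‖ ≤ R} :=
    (measurableSet_lt measurable_const measurable_norm).inter
      (measurableSet_le measurable_norm measurable_const)
  calc ∫⁻ y in {y | r < ‖y‖ ∧ ‖y‖ ≤ R}, f y ∂μ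
      ≤ c * μ {y | r < ‖y‖ ∧ ‖y‖ ≤ R} := by
        rw [← setLIntegral_const]
        exact setLIntegral_mono' hA fun y hy => hf y hy.1
    _ ≤ c * μ (closedBall 0 R) := by
        gcongr
        exact fun y hy => mem_closedBall_zero_iff.2 hy.2
    _ = _ := by rw [Measure.addHaar_closedBall' μ 0 hR]

section Kernel

variable {E : Type*} [NormedAddCommGroup E] [NormedSpace ℝ E] [MeasurableSpace E]

noncomputable def kernelProductAverage (g : Measure E) (x y : E) (τ₁ τ₂ : ℝ) : ENNReal :=
  ∫⁻ v, ENNReal.ofReal ((1 + ‖x - y - τ₁ • v‖ ^ 2)⁻¹ * (1 + ‖x - y - τ₂ • v‖ ^ 2)⁻¹) ∂g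

lemma kernelProductAverage_le_measure_univ (g : Measure E) (x y : E) (τ₁ τ₂ : ℝ) :
    kernelProductAverage g x y τ₁ τ₂ ≤ g univ :=
  (lintegral_mono fun _ => ENNReal.ofReal_le_one.2
    (inv_one_add_sq_mul_inv_one_add_sq_le_one _ _)).trans_eq lintegral_one

lemma kernelProductAverage_le_of_far [OpensMeasurableSpace E] (g : Measure E) {x y : E}
    {a T p M τ₁ τ₂ : ℝ} (ha : 0 < a) (hT : 0 < T) (hp : 0 ≤ p)
    (hM : ∫⁻ v, ENNReal.ofReal (‖v‖ ^ p) ∂g ≤ ENNReal.ofReal M)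
    (hx : ‖x‖ ≤ a / 8) (hy : a / 2 < ‖y‖) (hτ₁ : τ₁ ∈ Icc 0 T) (hτ₂ : τ₂ ∈ Icc 0 T) :
    kernelProductAverage g x y τ₁ τ₂
      ≤ ENNReal.ofReal (((a / 4) ^ 2)⁻¹ * ((a / 4) ^ 2)⁻¹) * g univ
        + ENNReal.ofReal (M / (a / (8 * T)) ^ p) := by
  have hsmall : ∀ τ ∈ Icc 0 T, ∀ v ∈ closedBall (0 : E) (a / (8 * T)),
      (1 + ‖x - y - τ • v‖ ^ 2)⁻¹ ≤ ((a / 4) ^ 2)⁻¹ := by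
    intro τ ⟨hτ0, hτT⟩ v hv
    have hτv : ‖τ • v‖ ≤ a / 8 :=
      calc ‖τ • v‖ = τ * ‖v‖ := by rw [norm_smul, Real.norm_of_nonneg hτ0]
        _ ≤ T * (a / (8 * T)) := by gcongr; exact mem_closedBall_zero_iff.1 hv
        _ = a / 8 := by field_simp
    exact inv_one_add_sq_le_inv_sq (by positivity) (le_norm_sub_sub_of_le hx hy hτv)
  have hslow : ∀ v ∈ closedBall (0 : E) (a / (8 * T)),
      ENNReal.ofReal ((1 + ‖x - y - τ₁ • v‖ ^ 2)⁻¹ * (1 + ‖x - y - τ₂ • v‖ ^ 2)⁻¹)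
        ≤ ENNReal.ofReal (((a / 4) ^ 2)⁻¹ * ((a / 4) ^ 2)⁻¹) := fun v hv =>
    ENNReal.ofReal_le_ofReal <|
      mul_le_mul (hsmall τ₁ hτ₁ v hv) (hsmall τ₂ hτ₂ v hv) (by positivity) (by positivity)
  refine (lintegral_le_mul_measure_univ_add_measure_compl g
    (fun v => ENNReal.ofReal_le_one.2 (inv_one_add_sq_mul_inv_one_add_sq_le_one _ _))
    hslow).trans ?_
  gcongr
  exact measure_compl_closedBall_le_of_lintegral_rpow_le g hp (by positivity) hM

end Kernel

lemma pow_div_div_rpow {a b : ℝ} (ha : 0 < a) (hb : 0 < b) (n : ℕ) (p : ℝ) :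
    a ^ n / (a / b) ^ p = b ^ p * a ^ (n - p) := by
  rw [Real.div_rpow ha.le hb.le, Real.rpow_sub ha, Real.rpow_natCast]
  field_simp

section Euclidean3

local notation "ℝ³" => EuclideanSpace ℝ (Fin 3)

variable (g : Measure ℝ³) {x : ℝ³} {τ₁ τ₂ a : ℝ}

lemma setLIntegral_annulus_kernelProductAverage_le [IsFiniteMeasure g] (ha : 0 ≤ a) :
    ∫⁻ y in {y | a / 2 < ‖y‖ ∧ ‖y‖ ≤ a}, kernelProductAverage g x y τ₁ τ₂
      ≤ ENNReal.ofReal (volume.real (closedBall (0 : ℝ³) 1) * g.real univ * a ^ 3) := by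
  refine (setLIntegral_annulus_le volume ha fun y _ =>
    kernelProductAverage_le_measure_univ g x y τ₁ τ₂).trans_eq ?_
  rw [finrank_euclideanSpace_fin, ← ofReal_measureReal measure_closedBall_lt_top.ne,
    ← ofReal_measureReal (measure_ne_top g univ), ← ENNReal.ofReal_mul (by positivity),
    ← ENNReal.ofReal_mul (by positivity)]
  ring_nf

lemma setLIntegral_annulus_kernelProductAverage_le_of_far [IsFiniteMeasure g] {T p M : ℝ}
    (ha : 0 < a) (hT : 0 < T) (hp : 0 ≤ p)
    (hM : ∫⁻ v, ENNReal.ofReal (‖v‖ ^ p) ∂g ≤ ENNReal.ofReal M) (hM0 : 0 ≤ M)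
    (hx : ‖x‖ ≤ a / 8) (hτ₁ : τ₁ ∈ Icc 0 T) (hτ₂ : τ₂ ∈ Icc 0 T) :
    ∫⁻ y in {y | a / 2 < ‖y‖ ∧ ‖y‖ ≤ a}, kernelProductAverage g x y τ₁ τ₂
      ≤ ENNReal.ofReal (volume.real (closedBall (0 : ℝ³) 1) * g.real univ * 4 ^ 4 * a⁻¹
          + volume.real (closedBall (0 : ℝ³) 1) * M * (8 * T) ^ p * a ^ (3 - p)) := by
  refine (setLIntegral_annulus_le volume ha.le fun y hy =>
    kernelProductAverage_le_of_far g ha hT hp hM hx hy hτ₁ hτ₂).trans_eq ?_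
  rw [finrank_euclideanSpace_fin, ← ofReal_measureReal measure_closedBall_lt_top.ne,
    ← ofReal_measureReal (measure_ne_top g univ), ← ENNReal.ofReal_mul (by positivity),
    ← ENNReal.ofReal_add (by positivity) (by positivity),
    ← ENNReal.ofReal_mul (by positivity), ← ENNReal.ofReal_mul (by positivity)]
  have hfast := pow_div_div_rpow ha (by positivity : 0 < 8 * T) 3 p
  rw [Nat.cast_ofNat] at hfast
  congr 1
  rw [mul_assoc _ ((8 * T) ^ p), ← hfast]
  field_simp

lemma exists_setLIntegral_annulus_kernelProductAverage_le {κ : ℝ} (hκ : 0 < κ)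
    [IsFiniteMeasure g] (hM : ∫⁻ v, ENNReal.ofReal (‖v‖ ^ (6 + κ)) ∂g < ⊤) {R₀ T : ℝ}
    (hR₀ : 0 < R₀) (hT : 0 < T) :
    ∃ C > 0, ∀ a : ℝ, 1 ≤ a → ∀ x : ℝ³, ‖x‖ ≤ R₀ → ∀ τ₁ ∈ Icc 0 T, ∀ τ₂ ∈ Icc 0 T,
      ∫⁻ y in {y | a / 2 < ‖y‖ ∧ ‖y‖ ≤ a}, kernelProductAverage g x y τ₁ τ₂
        ≤ ENNReal.ofReal (C * (a⁻¹ + a ^ (-(κ / 2)))) := by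
  set K := volume.real (closedBall (0 : ℝ³) 1)
  set G := g.real univ
  set M := (∫⁻ v, ENNReal.ofReal (‖v‖ ^ (6 + κ)) ∂g).toReal
  have hKG : 0 ≤ K * G := by positivity
  have hKM : 0 ≤ K * M * (8 * T) ^ (6 + κ) := by positivity
  set C := 1 + K * G * (4 ^ 4 + (8 * R₀) ^ 4) + K * M * (8 * T) ^ (6 + κ)
  have hCG : K * G * 4 ^ 4 ≤ C := by nlinarith [pow_nonneg hR₀.le 4]
  have hCR : K * G * (8 * R₀) ^ 4 ≤ C := by nlinarith
  have hCM : K * M * (8 * T) ^ (6 + κ) ≤ C := by nlinarith [pow_nonneg hR₀.le 4]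
  refine ⟨C, by positivity, fun a ha x hx τ₁ hτ₁ τ₂ hτ₂ => ?_⟩
  have ha0 : 0 < a := one_pos.trans_le ha
  by_cases hfar : 8 * R₀ ≤ a
  · refine (setLIntegral_annulus_kernelProductAverage_le_of_far g ha0 hT (by linarith)
      (ENNReal.ofReal_toReal hM.ne).ge ENNReal.toReal_nonneg (by linarith) hτ₁ hτ₂).trans
      (ENNReal.ofReal_le_ofReal ?_)
    calc K * G * 4 ^ 4 * a⁻¹ + K * M * (8 * T) ^ (6 + κ) * a ^ (3 - (6 + κ))
        ≤ K * G * 4 ^ 4 * a⁻¹ + K * M * (8 * T) ^ (6 + κ) * a ^ (-(κ / 2)) := by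
          gcongr
          linarith
      _ ≤ C * a⁻¹ + C * a ^ (-(κ / 2)) := by gcongr
      _ = C * (a⁻¹ + a ^ (-(κ / 2))) := (mul_add _ _ _).symm
  · refine (setLIntegral_annulus_kernelProductAverage_le g ha0.le).trans
      (ENNReal.ofReal_le_ofReal ?_)
    calc K * G * a ^ 3 = K * G * a ^ 4 * a⁻¹ := by field_simp
      _ ≤ K * G * (8 * R₀) ^ 4 * a⁻¹ := by gcongr; linarith
      _ ≤ C * a⁻¹ := by gcongr
      _ ≤ C * (a⁻¹ + a ^ (-(κ / 2))) := by gcongr; exact le_add_of_nonneg_right (by positivity)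

end Euclidean3

/-- Dyadic annulus estimate: for a finite Borel velocity measure `g` on `ℝ³` with
finite moment of order `6 + κ`, the contribution of the annulus `2^{j-1} < |y| ≤ 2^j`
to the second moment of the force field decays geometrically in `j`. -/
theorem dyadic_annulus_estimate (κ : ℝ) (hκ : 0 < κ)
    (g : Measure (EuclideanSpace ℝ (Fin 3))) [IsFiniteMeasure g]
    (hM : ∫⁻ v, ENNReal.ofReal (‖v‖ ^ (6 + κ)) ∂g < ⊤) :
    ∀ R₀ > (0 : ℝ), ∀ T > (0 : ℝ), ∃ C > (0 : ℝ),
      ∀ j : ℕ, 1 ≤ j → ∀ x : EuclideanSpace ℝ (Fin 3), ‖x‖ ≤ R₀ →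
      ∀ τ₁ ∈ Set.Icc (0 : ℝ) T, ∀ τ₂ ∈ Set.Icc (0 : ℝ) T,
      (∫⁻ y in {y : EuclideanSpace ℝ (Fin 3) | (2 : ℝ) ^ (j - 1) < ‖y‖ ∧ ‖y‖ ≤ (2 : ℝ) ^ j},
          ∫⁻ v, ENNReal.ofReal
            ((1 + ‖x - y - τ₁ • v‖ ^ 2)⁻¹ * (1 + ‖x - y - τ₂ • v‖ ^ 2)⁻¹) ∂g)
        ≤ ENNReal.ofReal (C * (((2 : ℝ) ^ j)⁻¹ + (2 : ℝ) ^ (-(κ * (j : ℝ)) / 2))) := by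
  intro R₀ hR₀ T hT
  obtain ⟨C, hC, hbound⟩ := exists_setLIntegral_annulus_kernelProductAverage_le g hκ hM hR₀ hT
  refine ⟨C, hC, fun j hj x hx τ₁ hτ₁ τ₂ hτ₂ => ?_⟩
  have hinner : (2 : ℝ) ^ (j - 1) = 2 ^ j / 2 := by
    rw [eq_div_iff two_ne_zero, ← pow_succ, Nat.sub_add_cancel hj]
  have hdecay : (2 : ℝ) ^ (-(κ * (j : ℝ)) / 2) = (2 ^ j) ^ (-(κ / 2)) := by
    rw [← Real.rpow_natCast, ← Real.rpow_mul zero_le_two]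
    ring_nf
  rw [hinner, hdecay]
  exact hbound _ (one_le_pow₀ one_le_two) x hx τ₁ hτ₁ τ₂ hτ₂
end

section
/- Let Φ : ℝ³ → ℝ be continuously differentiable and suppose there exist constants C > 0 and a > 2 such that |∇Φ(x)| ≤ C (1 + |x|)^{-(1+a)} for all x ∈ ℝ³. Let g ∈ C¹(ℝ³, ℝ) be compactly supported and let V ∈ ℝ³. Then the vector-valued integral Λ := ∫_{ℝ³} ∫_{ℝ³} ∇Φ(η) ⟨∇g(w), ∫_{-∞}^{0} ∇Φ(η + u·(w − V)) du⟩ dw dη is absolutely convergent, and the functions H(t) := ∫_{ℝ³} ∫_{ℝ³} ∇Φ(η) ⟨∇g(w), ∫_{-t}^{0} ∇Φ(η + u·(w − V)) du⟩ dw dη converge to Λ as t → ∞. -/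
/-! Substituting along the line `u ↦ η + u • (w - V)` shows that the line integral of a force
decaying like `(1 + ‖x‖) ^ (-r)` with `r > 1` is at most `C K / ‖w - V‖`, where
`K = ∫ (1 + |s|) ^ (-r) ds`, uniformly in the range of integration. Every integrand is therefore
dominated by `C K ‖∇Φ η‖ ‖∇g w‖ / ‖w - V‖`, which is integrable on the product: `∇Φ` is
integrable because `r > 3`, and `‖w - V‖⁻¹` is locally integrable in dimension at least two while
`∇g` is bounded with compact support. Dominated convergence, in `u` and then on the product
space, gives the limit. -/

open MeasureTheory RealInnerProductSpace Filter

section Line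

variable {E F : Type*} [NormedAddCommGroup E] [InnerProductSpace ℝ E] [NormedAddCommGroup F]

lemma abs_inner_div_norm_add_mul_norm_le_norm_add_smul (η v : E) (u : ℝ) :
    |⟪η, v⟫ / ‖v‖ + u * ‖v‖| ≤ ‖η + u • v‖ := by
  rcases eq_or_ne v 0 with rfl | hv
  · simp
  have hm : 0 < ‖v‖ := norm_pos_iff.mpr hv
  have hline : ⟪η, v⟫ / ‖v‖ + u * ‖v‖ = ⟪η + u • v, v⟫ / ‖v‖ := by
    rw [inner_add_left, real_inner_smul_left, real_inner_self_eq_norm_mul_norm]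
    field_simp
  rw [hline, abs_div, abs_norm, div_le_iff₀ hm]
  exact abs_real_inner_le_norm _ _

lemma integrable_one_add_norm_affine_rpow (c : ℝ) {m r : ℝ} (hm : m ≠ 0) (hr : 1 < r) :
    Integrable (fun u : ℝ => (1 + ‖c + u * m‖) ^ (-r)) := by
  have hprofile : Integrable (fun s : ℝ => (1 + ‖s‖) ^ (-r)) :=
    integrable_one_add_norm (by simpa using hr)
  exact (hprofile.comp_add_left c).comp_mul_right' hm

lemma integral_one_add_norm_affine_rpow (c : ℝ) {m : ℝ} (hm : 0 < m) (r : ℝ) :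
    ∫ u : ℝ, (1 + ‖c + u * m‖) ^ (-r) = (∫ s : ℝ, (1 + ‖s‖) ^ (-r)) / m := by
  rw [Measure.integral_comp_mul_right (fun s => (1 + ‖c + s‖) ^ (-r)),
    integral_add_left_eq_self (fun s : ℝ => (1 + ‖s‖) ^ (-r)), abs_of_pos (inv_pos.mpr hm),
    smul_eq_mul, inv_mul_eq_div]

variable {f : E → F} {C r : ℝ}

lemma norm_comp_line_le (hdecay : ∀ x, ‖f x‖ ≤ C * (1 + ‖x‖) ^ (-r)) (hr : 0 ≤ r)
    (η v : E) (u : ℝ) :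
    ‖f (η + u • v)‖ ≤ C * (1 + ‖⟪η, v⟫ / ‖v‖ + u * ‖v‖‖) ^ (-r) := by
  have hC : 0 ≤ C := by simpa using (norm_nonneg _).trans (hdecay 0)
  refine (hdecay _).trans (mul_le_mul_of_nonneg_left ?_ hC)
  refine Real.rpow_le_rpow_of_nonpos (by positivity) ?_ (neg_nonpos.mpr hr)
  gcongr
  exact abs_inner_div_norm_add_mul_norm_le_norm_add_smul η v u

lemma integrable_comp_line (hf : Continuous f) (hdecay : ∀ x, ‖f x‖ ≤ C * (1 + ‖x‖) ^ (-r))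
    (hr : 1 < r) (η : E) {v : E} (hv : v ≠ 0) : Integrable (fun u : ℝ => f (η + u • v)) :=
  ((integrable_one_add_norm_affine_rpow _ (norm_ne_zero_iff.mpr hv) hr).const_mul C).mono'
    (by fun_prop) (.of_forall (norm_comp_line_le hdecay (by linarith) η v))

lemma norm_setIntegral_comp_line_le [NormedSpace ℝ F] (hf : Continuous f)
    (hdecay : ∀ x, ‖f x‖ ≤ C * (1 + ‖x‖) ^ (-r)) (hr : 1 < r) (η : E) {v : E} (hv : v ≠ 0)
    (S : Set ℝ) :
    ‖∫ u in S, f (η + u • v)‖ ≤ C * (∫ s : ℝ, (1 + ‖s‖) ^ (-r)) / ‖v‖ := by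
  have hm : 0 < ‖v‖ := norm_pos_iff.mpr hv
  have hint := integrable_comp_line hf hdecay hr η hv
  calc ‖∫ u in S, f (η + u • v)‖
      ≤ ∫ u in S, ‖f (η + u • v)‖ := norm_integral_le_integral_norm _
    _ ≤ ∫ u, ‖f (η + u • v)‖ :=
        setIntegral_le_integral hint.norm (.of_forall fun _ => norm_nonneg _)
    _ ≤ ∫ u, C * (1 + ‖⟪η, v⟫ / ‖v‖ + u * ‖v‖‖) ^ (-r) :=
        integral_mono hint.norm
          ((integrable_one_add_norm_affine_rpow _ hm.ne' hr).const_mul C)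
          (norm_comp_line_le hdecay (by linarith) η v)
    _ = C * (∫ s : ℝ, (1 + ‖s‖) ^ (-r)) / ‖v‖ := by
        rw [integral_const_mul, integral_one_add_norm_affine_rpow _ hm, mul_div_assoc]

end Line

lemma tendsto_setIntegral_Icc_neg_atTop {F : Type*} [NormedAddCommGroup F] [NormedSpace ℝ F]
    {f : ℝ → F} (b : ℝ) (hf : IntegrableOn f (Set.Iic b)) :
    Tendsto (fun t => ∫ u in Set.Icc (-t) b, f u) atTop (nhds (∫ u in Set.Iic b, f u)) := by
  have hunion : ⋃ t : ℝ, Set.Icc (-t) b = Set.Iic b := by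
    ext x
    simp only [Set.mem_iUnion, Set.mem_Icc, Set.mem_Iic]
    exact ⟨fun ⟨_, h⟩ => h.2, fun hx => ⟨-x, (neg_neg x).le, hx⟩⟩
  rw [← hunion]
  exact tendsto_setIntegral_of_monotone (fun _ => measurableSet_Icc)
    (fun _ _ hst => Set.Icc_subset_Icc_left (neg_le_neg hst)) (hunion ▸ hf)

section Weight

variable {E F : Type*} [NormedAddCommGroup E] [NormedSpace ℝ E] [FiniteDimensional ℝ E]
  [MeasurableSpace E] [BorelSpace E] (μ : Measure E) [μ.IsAddHaarMeasure]

lemma locallyIntegrable_inv_norm (hE : 2 ≤ Module.finrank ℝ E) :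
    LocallyIntegrable (fun x : E => ‖x‖⁻¹) μ := by
  have : Nontrivial E := Module.nontrivial_of_finrank_pos (R := ℝ) (by omega)
  intro x
  refine ⟨Metric.ball 0 (‖x‖ + 1), Metric.isOpen_ball.mem_nhds (by simp), ?_⟩
  rw [integrableOn_fun_norm_addHaar μ (f := fun y => y⁻¹)]
  refine ((continuous_pow (Module.finrank ℝ E - 2)).integrableOn_Icc.mono_set
    Set.Ioo_subset_Icc_self).congr_fun (fun y hy => ?_) measurableSet_Ioo
  rw [show Module.finrank ℝ E - 1 = Module.finrank ℝ E - 2 + 1 by omega, pow_succ, smul_eq_mul,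
    mul_assoc, mul_inv_cancel₀ hy.1.ne', mul_one]

lemma locallyIntegrable_inv_norm_sub (hE : 2 ≤ Module.finrank ℝ E) (V : E) :
    LocallyIntegrable (fun x : E => ‖x - V‖⁻¹) μ := by
  have := (locallyIntegrable_map_homeomorph (Homeomorph.addRight (-V)) (μ := μ)).mp
    (by simpa [map_add_right_eq_self] using locallyIntegrable_inv_norm μ hE)
  simpa [Function.comp_def, ← sub_eq_add_neg] using this

lemma integrable_norm_div_norm_sub [NormedAddCommGroup F] (hE : 2 ≤ Module.finrank ℝ E)
    {G : E → F} (hG : Continuous G) (hGsupp : HasCompactSupport G) (V : E) :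
    Integrable (fun w => ‖G w‖ / ‖w - V‖) μ := by
  simpa [div_eq_inv_mul] using
    (locallyIntegrable_inv_norm_sub μ hE V).integrable_smul_right_of_hasCompactSupport
      hG.norm hGsupp.norm

end Weight

section Gradient

variable {E : Type*} [NormedAddCommGroup E] [InnerProductSpace ℝ E] [CompleteSpace E]
  {f : E → ℝ}

lemma ContDiff.continuous_gradient (hf : ContDiff ℝ 1 f) : Continuous (gradient f) :=
  (InnerProductSpace.toDual ℝ E).symm.continuous.comp (hf.continuous_fderiv one_ne_zero)

lemma HasCompactSupport.gradient (hf : HasCompactSupport f) : HasCompactSupport (gradient f) :=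
  (hf.fderiv (𝕜 := ℝ)).comp_left (map_zero _)

end Gradient

section Friction

variable {E : Type*} [NormedAddCommGroup E] [InnerProductSpace ℝ E]
  {F G : E → E} {C r : ℝ} (V : E)

noncomputable def frictionIntegrand (F G : E → E) (V : E) (S : Set ℝ) (p : E × E) : E :=
  ⟪G p.2, ∫ u in S, F (p.1 + u • (p.2 - V))⟫ • F p.1

lemma norm_frictionIntegrand_le (hF : Continuous F)
    (hdecay : ∀ x, ‖F x‖ ≤ C * (1 + ‖x‖) ^ (-r)) (hr : 1 < r) (S : Set ℝ) {p : E × E}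
    (hp : p.2 ≠ V) :
    ‖frictionIntegrand F G V S p‖
      ≤ C * (∫ s : ℝ, (1 + ‖s‖) ^ (-r)) * (‖F p.1‖ * (‖G p.2‖ / ‖p.2 - V‖)) := by
  have hline := norm_setIntegral_comp_line_le hF hdecay hr p.1 (sub_ne_zero.mpr hp) S
  calc ‖frictionIntegrand F G V S p‖
      = |⟪G p.2, ∫ u in S, F (p.1 + u • (p.2 - V))⟫| * ‖F p.1‖ := by
        rw [frictionIntegrand, norm_smul, Real.norm_eq_abs]
    _ ≤ ‖G p.2‖ * (C * (∫ s : ℝ, (1 + ‖s‖) ^ (-r)) / ‖p.2 - V‖) * ‖F p.1‖ := by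
        gcongr
        exact (abs_real_inner_le_norm _ _).trans (by gcongr)
    _ = _ := by ring

lemma tendsto_frictionIntegrand_Icc (hF : Continuous F)
    (hdecay : ∀ x, ‖F x‖ ≤ C * (1 + ‖x‖) ^ (-r)) (hr : 1 < r) {p : E × E} (hp : p.2 ≠ V) :
    Tendsto (fun t => frictionIntegrand F G V (Set.Icc (-t) 0) p) atTop
      (nhds (frictionIntegrand F G V (Set.Iic 0) p)) :=
  (tendsto_const_nhds.inner (tendsto_setIntegral_Icc_neg_atTop 0
    (integrable_comp_line hF hdecay hr p.1 (sub_ne_zero.mpr hp)).integrableOn)).smul_const _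

variable [FiniteDimensional ℝ E] [MeasurableSpace E] [BorelSpace E]
  (μ : Measure E) [μ.IsAddHaarMeasure]

lemma stronglyMeasurable_frictionIntegrand (hF : Continuous F) (hG : Continuous G) (S : Set ℝ) :
    StronglyMeasurable (frictionIntegrand F G V S) := by
  have hline : StronglyMeasurable fun p : E × E => ∫ u in S, F (p.1 + u • (p.2 - V)) :=
    StronglyMeasurable.integral_prod_right'
      (f := fun q : (E × E) × ℝ => F (q.1.1 + q.2 • (q.1.2 - V)))
      (by fun_prop : Continuous _).stronglyMeasurable
  exact ((hG.measurable.comp measurable_snd).inner hline.measurable).smul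
    (hF.measurable.comp measurable_fst) |>.stronglyMeasurable

lemma integrable_norm_mul_norm_div_norm_sub (hE : 2 ≤ Module.finrank ℝ E) (hF : Continuous F)
    (hdecay : ∀ x, ‖F x‖ ≤ C * (1 + ‖x‖) ^ (-r)) (hr : (Module.finrank ℝ E : ℝ) < r)
    (hG : Continuous G) (hGsupp : HasCompactSupport G) :
    Integrable (fun p : E × E => ‖F p.1‖ * (‖G p.2‖ / ‖p.2 - V‖)) (μ.prod μ) := by
  have hFint : Integrable F μ :=
    ((integrable_one_add_norm hr).const_mul C).mono' hF.aestronglyMeasurable (.of_forall hdecay)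
  exact hFint.norm.mul_prod (integrable_norm_div_norm_sub μ hE hG hGsupp V)

lemma integrable_frictionIntegrand (hE : 2 ≤ Module.finrank ℝ E) (hF : Continuous F)
    (hdecay : ∀ x, ‖F x‖ ≤ C * (1 + ‖x‖) ^ (-r)) (hr : (Module.finrank ℝ E : ℝ) < r)
    (hG : Continuous G) (hGsupp : HasCompactSupport G) (S : Set ℝ) :
    Integrable (frictionIntegrand F G V S) (μ.prod μ) := by
  have : Nontrivial E := Module.nontrivial_of_finrank_pos (R := ℝ) (by omega)
  have hr1 : 1 < r := by linarith [show (2 : ℝ) ≤ Module.finrank ℝ E by exact_mod_cast hE]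
  refine ((integrable_norm_mul_norm_div_norm_sub V μ hE hF hdecay hr hG hGsupp).const_mul
    (C * ∫ s : ℝ, (1 + ‖s‖) ^ (-r))).mono'
    (stronglyMeasurable_frictionIntegrand V hF hG S).aestronglyMeasurable ?_
  filter_upwards [Measure.quasiMeasurePreserving_snd.ae (Measure.ae_ne μ V)] with p hp
  exact norm_frictionIntegrand_le V hF hdecay hr1 S hp

lemma tendsto_integral_frictionIntegrand_Icc (hE : 2 ≤ Module.finrank ℝ E) (hF : Continuous F)
    (hdecay : ∀ x, ‖F x‖ ≤ C * (1 + ‖x‖) ^ (-r)) (hr : (Module.finrank ℝ E : ℝ) < r)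
    (hG : Continuous G) (hGsupp : HasCompactSupport G) :
    Tendsto (fun t => ∫ η, ∫ w, frictionIntegrand F G V (Set.Icc (-t) 0) (η, w) ∂μ ∂μ) atTop
      (nhds (∫ η, ∫ w, frictionIntegrand F G V (Set.Iic 0) (η, w) ∂μ ∂μ)) := by
  have : Nontrivial E := Module.nontrivial_of_finrank_pos (R := ℝ) (by omega)
  have hr1 : 1 < r := by linarith [show (2 : ℝ) ≤ Module.finrank ℝ E by exact_mod_cast hE]
  simp only [← integral_prod _ (integrable_frictionIntegrand V μ hE hF hdecay hr hG hGsupp _)]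
  refine tendsto_integral_filter_of_dominated_convergence _
    (.of_forall fun t => (stronglyMeasurable_frictionIntegrand V hF hG _).aestronglyMeasurable)
    (.of_forall fun t => ?_)
    ((integrable_norm_mul_norm_div_norm_sub V μ hE hF hdecay hr hG hGsupp).const_mul
      (C * ∫ s : ℝ, (1 + ‖s‖) ^ (-r))) ?_
  · filter_upwards [Measure.quasiMeasurePreserving_snd.ae (Measure.ae_ne μ V)] with p hp
    exact norm_frictionIntegrand_le V hF hdecay hr1 _ hp
  · filter_upwards [Measure.quasiMeasurePreserving_snd.ae (Measure.ae_ne μ V)] with p hp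
    exact tendsto_frictionIntegrand_Icc V hF hdecay hr1 hp

end Friction

theorem friction_stabilization_general
    (Φ : EuclideanSpace ℝ (Fin 3) → ℝ) (hΦ : ContDiff ℝ 1 Φ)
    (C a : ℝ) (ha : 2 < a)
    (hdecay : ∀ x, ‖gradient Φ x‖ ≤ C * (1 + ‖x‖) ^ (-(1 + a)))
    (g : EuclideanSpace ℝ (Fin 3) → ℝ) (hg : ContDiff ℝ 1 g)
    (hgsupp : HasCompactSupport g)
    (V : EuclideanSpace ℝ (Fin 3)) :
    Integrable (fun p : EuclideanSpace ℝ (Fin 3) × EuclideanSpace ℝ (Fin 3) =>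
        (⟪gradient g p.2, ∫ u in Set.Iic (0:ℝ), gradient Φ (p.1 + u • (p.2 - V))⟫ : ℝ)
          • gradient Φ p.1) (volume.prod volume) ∧
    Tendsto (fun t : ℝ => ∫ η, ∫ w,
        ((⟪gradient g w, ∫ u in Set.Icc (-t) (0:ℝ), gradient Φ (η + u • (w - V))⟫ : ℝ)
          • gradient Φ η))
      atTop
      (nhds (∫ η, ∫ w,
        ((⟪gradient g w, ∫ u in Set.Iic (0:ℝ), gradient Φ (η + u • (w - V))⟫ : ℝ)
          • gradient Φ η))) := by
  have hE : 2 ≤ Module.finrank ℝ (EuclideanSpace ℝ (Fin 3)) := by simp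
  have hr : (Module.finrank ℝ (EuclideanSpace ℝ (Fin 3)) : ℝ) < 1 + a := by
    rw [finrank_euclideanSpace_fin]; exact_mod_cast (by linarith : (3 : ℝ) < 1 + a)
  exact ⟨integrable_frictionIntegrand V volume hE hΦ.continuous_gradient hdecay hr
      hg.continuous_gradient hgsupp.gradient _,
    tendsto_integral_frictionIntegrand_Icc V volume hE hΦ.continuous_gradient hdecay hr
      hg.continuous_gradient hgsupp.gradient⟩

/-- Stabilization of the friction term for a tagged particle in a Rayleigh gas:
for a `C¹` potential whose force decays like `(1+|x|)^{-(1+a)}` with `a > 2` and a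
compactly supported `C¹` velocity distribution `g`, the double integral defining the
asymptotic friction coefficient is absolutely convergent and the finite-time friction
terms converge to it as `t → ∞`. -/
theorem friction_stabilization
    (Φ : EuclideanSpace ℝ (Fin 3) → ℝ) (hΦ : ContDiff ℝ 1 Φ)
    (C a : ℝ) (hC : 0 < C) (ha : 2 < a)
    (hdecay : ∀ x, ‖gradient Φ x‖ ≤ C * (1 + ‖x‖) ^ (-(1 + a)))
    (g : EuclideanSpace ℝ (Fin 3) → ℝ) (hg : ContDiff ℝ 1 g)
    (hgsupp : HasCompactSupport g)
    (V : EuclideanSpace ℝ (Fin 3)) :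
    Integrable (fun p : EuclideanSpace ℝ (Fin 3) × EuclideanSpace ℝ (Fin 3) =>
        (⟪gradient g p.2, ∫ u in Set.Iic (0:ℝ), gradient Φ (p.1 + u • (p.2 - V))⟫ : ℝ)
          • gradient Φ p.1) (volume.prod volume) ∧
    Tendsto (fun t : ℝ => ∫ η, ∫ w,
        ((⟪gradient g w, ∫ u in Set.Icc (-t) (0:ℝ), gradient Φ (η + u • (w - V))⟫ : ℝ)
          • gradient Φ η))
      atTop
      (nhds (∫ η, ∫ w,
        ((⟪gradient g w, ∫ u in Set.Iic (0:ℝ), gradient Φ (η + u • (w - V))⟫ : ℝ)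
          • gradient Φ η))) :=
  friction_stabilization_general Φ hΦ C a ha hdecay g hg hgsupp V
end

section
/- Let Φ : ℝ³ → ℝ be continuously differentiable and suppose there exist constants C > 0 and a > 2 such that |∇Φ(x)| ≤ C (1 + |x|)^{-(1+a)} for all x ∈ ℝ³. Let g : ℝ³ → [0,∞) be measurable and let v ∈ ℝ³. Then ∫₀^∞ ∫_{ℝ³} ∫_{ℝ³} |∇Φ(y + s·(w − v))| · |∇Φ(y)| · g(w) dw dy ds ≤ (2C/a) (∫_{ℝ³} |∇Φ(y)| dy) ∫_{ℝ³} g(w)/|w − v| dw; in particular, the triple integral is finite whenever ∫_{ℝ³} g(w)/|w − v| dw < ∞. -/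
/-!
Along the ray `s ↦ y + s • z` the norm `‖y + s • z‖` dominates `|‖z‖ s + ⟪y, z⟫ / ‖z‖|`
(Cauchy–Schwarz against `z`), so the decay bound on `∇Φ` reduces the `s`-integral to the
one-dimensional integral `∫ (1 + |t|)^{-(1+a)} dt = 2 / a` rescaled by `1 / ‖z‖`. With `z = w - v`,
Tonelli's theorem then factors the triple integral into `∫ |∇Φ|`, which is finite since
`1 + a > 3`, and `∫ g(w) / |w - v| dw`.
-/

open MeasureTheory Set ENNReal

theorem measurable_gradient {F : Type*} [NormedAddCommGroup F] [InnerProductSpace ℝ F]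
    [CompleteSpace F] [MeasurableSpace F] [BorelSpace F] (f : F → ℝ) :
    Measurable (gradient f) :=
  (InnerProductSpace.toDual ℝ F).symm.continuous.measurable.comp (measurable_fderiv ℝ f)

theorem abs_norm_mul_add_inner_div_norm_le {E : Type*} [NormedAddCommGroup E]
    [InnerProductSpace ℝ E] (y z : E) (s : ℝ) :
    |‖z‖ * s + inner ℝ y z / ‖z‖| ≤ ‖y + s • z‖ := by
  rcases eq_or_ne z 0 with rfl | hz
  · simp
  have hz' : 0 < ‖z‖ := norm_pos_iff.mpr hz
  have hinner : ‖z‖ * s + inner ℝ y z / ‖z‖ = inner ℝ (y + s • z) z / ‖z‖ := by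
    rw [inner_add_left, real_inner_smul_left, real_inner_self_eq_norm_sq]
    field_simp
    ring
  rw [hinner, abs_div, abs_norm, div_le_iff₀ hz']
  exact abs_real_inner_le_norm _ _

theorem lintegral_comp_mul_add {f : ℝ → ℝ≥0∞} (hf : Measurable f) {r : ℝ} (hr : r ≠ 0) (c : ℝ) :
    ∫⁻ s, f (r * s + c) = ENNReal.ofReal |r⁻¹| * ∫⁻ t, f t := by
  rw [← lintegral_add_right_eq_self f c, ← smul_eq_mul, ← lintegral_smul_measure,
    ← Real.map_volume_mul_left hr]
  exact (lintegral_map (f := fun t => f (t + c)) (hf.comp (measurable_add_const c))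
    (measurable_const_mul r)).symm

theorem setIntegral_Ioi_comp_const_add (f : ℝ → ℝ) (b c : ℝ) :
    ∫ t in Ioi b, f (c + t) = ∫ t in Ioi (c + b), f t := by
  have h := (measurePreserving_add_left (volume : Measure ℝ) c).setIntegral_preimage_emb
    (measurableEmbedding_addLeft c) f (Ioi (c + b))
  rwa [preimage_const_add_Ioi, add_sub_cancel_left] at h

theorem lintegral_one_add_abs_rpow_neg {a : ℝ} (ha : 0 < a) :
    ∫⁻ t : ℝ, ENNReal.ofReal ((1 + |t|) ^ (-(1 + a))) = ENNReal.ofReal (2 / a) := by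
  have hint : Integrable fun t : ℝ => (1 + |t|) ^ (-(1 + a)) := by
    simpa using integrable_one_add_norm (E := ℝ) (μ := volume) (r := 1 + a) (by simpa using ha)
  rw [← ofReal_integral_eq_lintegral_ofReal hint (.of_forall fun t => by positivity)]
  congr 1
  rw [integral_comp_abs (f := fun t => (1 + t) ^ (-(1 + a))),
    setIntegral_Ioi_comp_const_add (· ^ (-(1 + a))), add_zero,
    integral_Ioi_rpow_of_lt (by linarith) one_pos, Real.one_rpow,
    show -(1 + a) + 1 = -a by ring]
  field_simp

theorem lintegral_Ioi_comp_ray_le_of_decay {E : Type*} [NormedAddCommGroup E]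
    [InnerProductSpace ℝ E] {f : E → ℝ} {C a : ℝ} (ha : 0 < a)
    (hf : ∀ x, f x ≤ C * (1 + ‖x‖) ^ (-(1 + a))) (y : E) {z : E} (hz : z ≠ 0) :
    ∫⁻ s in Ioi (0 : ℝ), ENNReal.ofReal (f (y + s • z))
      ≤ ENNReal.ofReal (2 * C / a) * ENNReal.ofReal ‖z‖⁻¹ := by
  have hprofile : Measurable fun t : ℝ => ENNReal.ofReal ((1 + |t|) ^ (-(1 + a))) := by
    fun_prop
  have hpointwise (s : ℝ) : ENNReal.ofReal (f (y + s • z)) ≤ ENNReal.ofReal C *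
      ENNReal.ofReal ((1 + |‖z‖ * s + inner ℝ y z / ‖z‖|) ^ (-(1 + a))) :=
    calc ENNReal.ofReal (f (y + s • z))
        ≤ ENNReal.ofReal C * ENNReal.ofReal ((1 + ‖y + s • z‖) ^ (-(1 + a))) := by
          rw [← ENNReal.ofReal_mul' (by positivity)]
          exact ENNReal.ofReal_le_ofReal (hf _)
      _ ≤ _ := by
          gcongr ENNReal.ofReal C * ENNReal.ofReal ?_
          exact Real.rpow_le_rpow_of_nonpos (by positivity)
            (by grw [abs_norm_mul_add_inner_div_norm_le]) (by linarith)
  calc ∫⁻ s in Ioi (0 : ℝ), ENNReal.ofReal (f (y + s • z))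
      ≤ ∫⁻ s, ENNReal.ofReal C *
          ENNReal.ofReal ((1 + |‖z‖ * s + inner ℝ y z / ‖z‖|) ^ (-(1 + a))) :=
        (setLIntegral_le_lintegral _ _).trans (lintegral_mono hpointwise)
    _ = ENNReal.ofReal C * (ENNReal.ofReal |‖z‖⁻¹| * ENNReal.ofReal (2 / a)) := by
        rw [lintegral_const_mul' _ _ ofReal_ne_top,
          lintegral_comp_mul_add hprofile (norm_ne_zero_iff.mpr hz),
          lintegral_one_add_abs_rpow_neg ha]
    _ = ENNReal.ofReal (2 * C / a) * ENNReal.ofReal ‖z‖⁻¹ := by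
        rw [abs_inv, abs_norm, show 2 * C / a = C * (2 / a) by ring,
          ENNReal.ofReal_mul' (by positivity)]
        ring

section Tonelli

variable {E : Type*} [NormedAddCommGroup E] [NormedSpace ℝ E] [MeasurableSpace E] [BorelSpace E]
  [SecondCountableTopology E] {μ ν : Measure E} [SFinite μ] [SFinite ν] [NullSingletonClass ν]

theorem lintegral_Ioi_lintegral_lintegral_comp_ray_le {F G : E → ℝ≥0∞} (hF : Measurable F)
    (hG : Measurable G) {K : ℝ≥0∞}
    (hK : ∀ y z, z ≠ 0 → ∫⁻ s in Ioi (0 : ℝ), F (y + s • z) ≤ K * ENNReal.ofReal ‖z‖⁻¹)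
    (v : E) :
    ∫⁻ s in Ioi (0 : ℝ), ∫⁻ y, ∫⁻ w, F (y + s • (w - v)) * F y * G w ∂ν ∂μ
      ≤ K * (∫⁻ y, F y ∂μ) * ∫⁻ w, G w * ENNReal.ofReal ‖w - v‖⁻¹ ∂ν := by
  have hmeas : Measurable fun p : (ℝ × E) × E =>
      F (p.1.2 + p.1.1 • (p.2 - v)) * F p.1.2 * G p.2 := by
    fun_prop
  have hray : ∀ y w, w ≠ v →
      ∫⁻ s in Ioi (0 : ℝ), F (y + s • (w - v)) * F y * G w
        ≤ K * F y * (G w * ENNReal.ofReal ‖w - v‖⁻¹) := by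
    intro y w hw
    rw [lintegral_mul_const _ (by fun_prop), lintegral_mul_const _ (by fun_prop)]
    calc (∫⁻ s in Ioi (0 : ℝ), F (y + s • (w - v))) * F y * G w
        ≤ K * ENNReal.ofReal ‖w - v‖⁻¹ * F y * G w := by
          gcongr; exact hK y _ (sub_ne_zero.mpr hw)
      _ = K * F y * (G w * ENNReal.ofReal ‖w - v‖⁻¹) := by ring
  have hH : Measurable fun w => G w * ENNReal.ofReal ‖w - v‖⁻¹ := by fun_prop
  calc ∫⁻ s in Ioi (0 : ℝ), ∫⁻ y, ∫⁻ w, F (y + s • (w - v)) * F y * G w ∂ν ∂μ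
      = ∫⁻ y, ∫⁻ w, (∫⁻ s in Ioi (0 : ℝ), F (y + s • (w - v)) * F y * G w) ∂ν ∂μ := by
        rw [lintegral_lintegral_swap hmeas.lintegral_prod_right'.aemeasurable]
        refine lintegral_congr fun y => lintegral_lintegral_swap ?_
        exact (hmeas.comp (by fun_prop : Measurable fun p : ℝ × E => ((p.1, y), p.2))).aemeasurable
    _ ≤ ∫⁻ y, ∫⁻ w, K * F y * (G w * ENNReal.ofReal ‖w - v‖⁻¹) ∂ν ∂μ := by
        refine lintegral_mono fun y => lintegral_mono_ae ?_
        filter_upwards [ν.ae_ne v] with w hw using hray y w hw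
    _ = K * (∫⁻ y, F y ∂μ) * ∫⁻ w, G w * ENNReal.ofReal ‖w - v‖⁻¹ ∂ν := by
        simp_rw [lintegral_const_mul _ hH]
        rw [lintegral_mul_const _ (by fun_prop), lintegral_const_mul _ hF]

end Tonelli

theorem grazing_absolute_convergence_general
    (Φ : EuclideanSpace ℝ (Fin 3) → ℝ)
    (C a : ℝ) (ha : 2 < a)
    (hdecay : ∀ x, ‖gradient Φ x‖ ≤ C * (1 + ‖x‖) ^ (-(1 + a)))
    (g : EuclideanSpace ℝ (Fin 3) → ℝ) (hg_meas : Measurable g)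
    (v : EuclideanSpace ℝ (Fin 3)) :
    (∫⁻ s in Set.Ioi (0:ℝ), ∫⁻ y, ∫⁻ w, ENNReal.ofReal
        (‖gradient Φ (y + s • (w - v))‖ * ‖gradient Φ y‖ * g w))
      ≤ ENNReal.ofReal ((2 * C / a) * ∫ y, ‖gradient Φ y‖)
          * ∫⁻ w, ENNReal.ofReal (g w / ‖w - v‖) ∧
    ((∫⁻ w, ENNReal.ofReal (g w / ‖w - v‖)) < ⊤ →
      (∫⁻ s in Set.Ioi (0:ℝ), ∫⁻ y, ∫⁻ w, ENNReal.ofReal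
        (‖gradient Φ (y + s • (w - v))‖ * ‖gradient Φ y‖ * g w)) < ⊤) := by
  have hgrad : Measurable fun x => ‖gradient Φ x‖ := (measurable_gradient Φ).norm
  have hint : Integrable fun y => ‖gradient Φ y‖ := by
    refine ((integrable_one_add_norm ?_).const_mul C).mono' hgrad.aestronglyMeasurable
      (.of_forall fun x => (norm_norm (gradient Φ x)).symm ▸ hdecay x)
    simp only [finrank_euclideanSpace, Fintype.card_fin]
    push_cast
    linarith
  have hbound := lintegral_Ioi_lintegral_lintegral_comp_ray_le (μ := volume) (ν := volume)
    hgrad.ennreal_ofReal hg_meas.ennreal_ofReal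
    (fun y _ hz => lintegral_Ioi_comp_ray_le_of_decay (by linarith) hdecay y hz) v
  refine ⟨?bound, fun hW => (?bound).trans_lt (mul_lt_top ofReal_lt_top hW)⟩
  simp_rw [ENNReal.ofReal_mul (mul_nonneg (norm_nonneg _) (norm_nonneg _)),
    ENNReal.ofReal_mul (norm_nonneg _), div_eq_mul_inv,
    ENNReal.ofReal_mul' (inv_nonneg.mpr (norm_nonneg _)),
    ENNReal.ofReal_mul' (integral_nonneg fun _ => norm_nonneg _),
    ofReal_integral_eq_lintegral_ofReal hint (.of_forall fun _ => norm_nonneg _)]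
  exact hbound

/-- Absolute-convergence bound for the grazing-collision diffusion and friction integrals:
`∫₀^∞ ∫∫ |∇Φ(y + s(w−v))| |∇Φ(y)| g(w) dw dy ds ≤ (2C/a)(∫|∇Φ|) ∫ g(w)/|w−v| dw`,
finite whenever `∫ g(w)/|w−v| dw < ∞`. -/
theorem grazing_absolute_convergence
    (Φ : EuclideanSpace ℝ (Fin 3) → ℝ) (hΦ : ContDiff ℝ 1 Φ)
    (C a : ℝ) (hC : 0 < C) (ha : 2 < a)
    (hdecay : ∀ x, ‖gradient Φ x‖ ≤ C * (1 + ‖x‖) ^ (-(1 + a)))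
    (g : EuclideanSpace ℝ (Fin 3) → ℝ) (hg_meas : Measurable g)
    (hg_nonneg : ∀ w, 0 ≤ g w)
    (v : EuclideanSpace ℝ (Fin 3)) :
    (∫⁻ s in Set.Ioi (0:ℝ), ∫⁻ y, ∫⁻ w, ENNReal.ofReal
        (‖gradient Φ (y + s • (w - v))‖ * ‖gradient Φ y‖ * g w))
      ≤ ENNReal.ofReal ((2 * C / a) * ∫ y, ‖gradient Φ y‖)
          * ∫⁻ w, ENNReal.ofReal (g w / ‖w - v‖) ∧
    ((∫⁻ w, ENNReal.ofReal (g w / ‖w - v‖)) < ⊤ →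
      (∫⁻ s in Set.Ioi (0:ℝ), ∫⁻ y, ∫⁻ w, ENNReal.ofReal
        (‖gradient Φ (y + s • (w - v))‖ * ‖gradient Φ y‖ * g w)) < ⊤) :=
  grazing_absolute_convergence_general Φ C a ha hdecay g hg_meas v
end

section
/- Let K : ℝ → ℝ be locally integrable and suppose that lim_{s→+∞} s·K(s) = Γ₊ and lim_{s→−∞} |s|·K(s) = Γ₋ for some real numbers Γ₊, Γ₋. Then lim_{T→∞} (1/(T·log T)) ∫₀^T ( ∫_{−t}^{T−t} K(s) ds ) dt = Γ₊ + Γ₋. -/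
/-!
With `H x = ∫₀ˣ K`, the inner integral is `H (T - t) - H (-t)`, and the substitution `t ↦ T - t`
turns the double integral into `∫₀ᵀ G` with `G t = ∫₀ᵗ (K s + K (-s)) ds`. Integration against a
nonnegative weight with divergent integral preserves `o(·)` (an integrated L'Hôpital rule).
Comparing `K s + K (-s)` with `1 / s` gives `G t ~ (Γ₊ + Γ₋) log t`; comparing `G` with `log` gives
`∫₀ᵀ G ~ (Γ₊ + Γ₋) ∫₀ᵀ log = (Γ₊ + Γ₋) (T log T - T)`.
-/

open MeasureTheory Filter Set Asymptotics intervalIntegral Topology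

section

variable {E : Type*} [NormedAddCommGroup E] [NormedSpace ℝ E] {a : ℝ}

theorem isLittleO_integral_of_isLittleO {u : ℝ → E} {g : ℝ → ℝ}
    (hu : ∀ b ≥ a, IntervalIntegrable u volume a b) (hg : ∀ b ≥ a, IntervalIntegrable g volume a b)
    (hg_nonneg : ∀ᶠ s in atTop, 0 ≤ g s) (hG : Tendsto (fun T => ∫ s in a..T, g s) atTop atTop)
    (huo : u =o[atTop] g) :
    (fun T => ∫ s in a..T, u s) =o[atTop] fun T => ∫ s in a..T, g s := by
  refine IsLittleO.of_bound fun c hc => ?_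
  obtain ⟨M, hM⟩ := eventually_atTop.1
    ((huo.bound (half_pos hc)).and (hg_nonneg.and (eventually_ge_atTop a)))
  have haM : a ≤ M := (hM M le_rfl).2.2
  set C := ‖∫ s in a..M, u s‖ + c / 2 * |∫ s in a..M, g s| with hC_def
  filter_upwards [eventually_ge_atTop M, hG.eventually_ge_atTop (2 / c * C)] with T hMT hCT
  have haT : a ≤ T := haM.trans hMT
  have htail : ‖∫ s in M..T, u s‖ ≤ c / 2 * ((∫ s in a..T, g s) - ∫ s in a..M, g s) := by
    rw [integral_interval_sub_left (hg T haT) (hg M haM), ← intervalIntegral.integral_const_mul]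
    refine norm_integral_le_of_norm_le hMT (ae_of_all _ fun s hs => ?_)
      (((hg M haM).symm.trans (hg T haT)).const_mul _)
    obtain ⟨hus, hgs, -⟩ := hM s hs.1.le
    rwa [Real.norm_of_nonneg hgs] at hus
  have hC : C ≤ c / 2 * ∫ s in a..T, g s := by
    calc C = c / 2 * (2 / c * C) := by field_simp
      _ ≤ c / 2 * ∫ s in a..T, g s := by gcongr
  have hGT : 0 ≤ ∫ s in a..T, g s := le_trans (by positivity) hCT
  rw [← integral_add_adjacent_intervals (hu M haM) ((hu M haM).symm.trans (hu T haT)),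
    Real.norm_of_nonneg hGT]
  calc ‖(∫ s in a..M, u s) + ∫ s in M..T, u s‖
      ≤ ‖∫ s in a..M, u s‖ + ‖∫ s in M..T, u s‖ := norm_add_le _ _
    _ ≤ C + c / 2 * ∫ s in a..T, g s := by
      linarith [mul_le_mul_of_nonneg_left (neg_abs_le (∫ s in a..M, g s)) (half_pos hc).le]
    _ ≤ c * ∫ s in a..T, g s := by linarith

theorem tendsto_integral_div_integral_of_tendsto_div {f g : ℝ → ℝ} {L : ℝ}
    (hf : ∀ b ≥ a, IntervalIntegrable f volume a b) (hg : ∀ b ≥ a, IntervalIntegrable g volume a b)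
    (hg_pos : ∀ᶠ s in atTop, 0 < g s) (hG : Tendsto (fun T => ∫ s in a..T, g s) atTop atTop)
    (hfg : Tendsto (fun s => f s / g s) atTop (𝓝 L)) :
    Tendsto (fun T => (∫ s in a..T, f s) / ∫ s in a..T, g s) atTop (𝓝 L) := by
  have hdev : (fun s => f s - L * g s) =o[atTop] g := by
    rw [isLittleO_iff_tendsto' (hg_pos.mono fun s hs h => (hs.ne' h).elim)]
    refine (sub_self L ▸ hfg.sub_const L).congr' (hg_pos.mono fun s hs => ?_)
    field_simp
  have hint := (isLittleO_integral_of_isLittleO (fun b hb => (hf b hb).sub ((hg b hb).const_mul L))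
    hg (hg_pos.mono fun _ => le_of_lt) hG hdev).tendsto_div_nhds_zero
  refine (add_zero L ▸ tendsto_const_nhds.add hint).congr' ?_
  filter_upwards [eventually_ge_atTop a, hG.eventually_gt_atTop 0] with T haT hGT
  rw [integral_sub (hf T haT) ((hg T haT).const_mul L), intervalIntegral.integral_const_mul]
  field_simp
  ring

end

open Real

theorem tendsto_integral_div_log_of_tendsto_mul {f : ℝ → ℝ} {L : ℝ}
    (hf : ∀ a b, IntervalIntegrable f volume a b) (hfL : Tendsto (fun s => s * f s) atTop (𝓝 L)) :
    Tendsto (fun t => (∫ s in 0..t, f s) / log t) atTop (𝓝 L) := by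
  have hlog : ∀ t > 0, ∫ s in 1..t, s⁻¹ = log t := fun t ht => by
    rw [integral_inv_of_pos one_pos ht, div_one]
  have hinv : ∀ b ≥ (1 : ℝ), IntervalIntegrable (fun s => s⁻¹) volume 1 b := fun b hb =>
    intervalIntegrable_inv (fun x hx => ((uIcc_of_le hb ▸ hx).1.trans_lt' one_pos).ne')
      continuousOn_id
  have hratio := tendsto_integral_div_integral_of_tendsto_div (g := fun s => s⁻¹)
    (fun b _ => hf 1 b) hinv
    ((eventually_gt_atTop 0).mono fun s hs => inv_pos.2 hs)
    (tendsto_log_atTop.congr' ((eventually_gt_atTop 0).mono fun t ht => (hlog t ht).symm))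
    (hfL.congr fun s => by rw [div_inv_eq_mul, mul_comm])
  have hconst : Tendsto (fun t => (∫ s in 0..1, f s) / log t) atTop (𝓝 0) :=
    tendsto_const_nhds.div_atTop tendsto_log_atTop
  refine (zero_add L ▸ hconst.add hratio).congr' ?_
  filter_upwards [eventually_gt_atTop 0] with t ht
  rw [hlog t ht, ← integral_add_adjacent_intervals (hf 0 1) (hf 1 t), add_div]

theorem tendsto_integral_div_mul_log_of_tendsto_div_log {G : ℝ → ℝ} {L : ℝ}
    (hG : ∀ a b, IntervalIntegrable G volume a b)
    (hGL : Tendsto (fun t => G t / log t) atTop (𝓝 L)) :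
    Tendsto (fun T => (∫ t in 0..T, G t) / (T * log T)) atTop (𝓝 L) := by
  have hlog : ∀ T, ∫ t in 0..T, log t = T * (log T - 1) := fun T => by
    rw [integral_log]; ring
  have hlog_top : Tendsto (fun T => T * (log T - 1)) atTop atTop :=
    tendsto_id.atTop_mul_atTop₀ (tendsto_atTop_add_const_right _ _ tendsto_log_atTop)
  have hratio := tendsto_integral_div_integral_of_tendsto_div (fun b _ => hG 0 b)
    (fun _ _ => intervalIntegrable_log') ((eventually_gt_atTop 1).mono fun t ht => log_pos ht)
    (by simpa only [hlog] using hlog_top) hGL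
  have hlog_ratio : Tendsto (fun T => 1 - (log T)⁻¹) atTop (𝓝 1) := by
    simpa using tendsto_const_nhds.sub (tendsto_inv_atTop_zero.comp tendsto_log_atTop)
  refine (mul_one L ▸ hratio.mul hlog_ratio).congr' ?_
  filter_upwards [eventually_gt_atTop 1, hlog_top.eventually_gt_atTop 0] with T hT hT'
  have hlogT : 0 < log T := log_pos hT
  have hlogT_sub : log T - 1 ≠ 0 := right_ne_zero_of_mul hT'.ne'
  rw [hlog]
  field_simp

theorem integral_integral_neg_sub_eq {E : Type*} [NormedAddCommGroup E] [NormedSpace ℝ E]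
    {K : ℝ → E} (hK : ∀ a b, IntervalIntegrable K volume a b) (T : ℝ) :
    ∫ t in 0..T, ∫ s in -t..T - t, K s = ∫ t in 0..T, ∫ s in 0..t, (K s + K (-s)) := by
  set H : ℝ → E := fun x => ∫ s in 0..x, K s
  have hH : Continuous H := continuous_primitive hK 0
  have hwindow : ∀ t, ∫ s in -t..T - t, K s = H (T - t) - H (-t) := fun t =>
    (integral_interval_sub_left (hK 0 (T - t)) (hK 0 (-t))).symm
  have hsym : ∀ t, ∫ s in 0..t, (K s + K (-s)) = H t - H (-t) := fun t => by
    rw [integral_add (hK 0 t) (by simpa using (IntervalIntegrable.iff_comp_neg).1 (hK 0 (-t))),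
      integral_comp_neg, neg_zero, integral_symm 0 (-t), sub_eq_add_neg]
  have hH_neg : IntervalIntegrable (fun t => H (-t)) volume 0 T :=
    (hH.comp continuous_neg).intervalIntegrable 0 T
  have hH_sub : IntervalIntegrable (fun t => H (T - t)) volume 0 T :=
    (hH.comp (continuous_sub_left T)).intervalIntegrable 0 T
  simp_rw [hwindow, hsym]
  rw [integral_sub hH_sub hH_neg,
    integral_sub (hH.intervalIntegrable 0 T) hH_neg, integral_comp_sub_left, sub_self, sub_zero]

/-- The Coulombian-logarithm asymptotics: if `K` is locally integrable with
`s K(s) → Γ₊` as `s → +∞` and `|s| K(s) → Γ₋` as `s → −∞`, then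
`(1/(T log T)) ∫₀^T ∫_{−t}^{T−t} K(s) ds dt → Γ₊ + Γ₋` as `T → ∞`. -/
theorem coulomb_logarithm_asymptotics
    (K : ℝ → ℝ) (hK : LocallyIntegrable K volume) (Γp Γm : ℝ)
    (hp : Tendsto (fun s : ℝ => s * K s) atTop (nhds Γp))
    (hm : Tendsto (fun s : ℝ => |s| * K s) atBot (nhds Γm)) :
    Tendsto (fun T : ℝ =>
        (T * Real.log T)⁻¹ * ∫ t in (0:ℝ)..T, ∫ s in (-t)..(T - t), K s)
      atTop (nhds (Γp + Γm)) := by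
  have hKi : ∀ a b, IntervalIntegrable K volume a b := fun a b =>
    (hK.integrableOn_isCompact isCompact_uIcc).intervalIntegrable
  have hsymi : ∀ a b, IntervalIntegrable (fun s => K s + K (-s)) volume a b := fun a b =>
    (hKi a b).add (by simpa using (IntervalIntegrable.iff_comp_neg).1 (hKi (-a) (-b)))
  have hm' : Tendsto (fun s => s * K (-s)) atTop (𝓝 Γm) :=
    (hm.comp tendsto_neg_atTop_atBot).congr' ((eventually_ge_atTop 0).mono fun s hs => by
      simp [abs_of_nonneg hs])
  have hG_log := tendsto_integral_div_log_of_tendsto_mul hsymi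
    (by simpa only [mul_add] using hp.add hm')
  simpa only [integral_integral_neg_sub_eq hKi, inv_mul_eq_div] using
    tendsto_integral_div_mul_log_of_tendsto_div_log
      (fun a b => (continuous_primitive hsymi 0).intervalIntegrable a b) hG_log
end

section
/- Let Φ : ℝ³ → ℝ be continuously differentiable and suppose there exist constants C > 0 and a > 2 such that |∇Φ(x)| ≤ C (1 + |x|)^{-(1+a)} for all x ∈ ℝ³. Let g be a finite Borel measure on ℝ³ and let V ∈ ℝ³ with ∫_{ℝ³} dg(v)/|v − V| < ∞. Then ∫_ℝ ∫_{ℝ³} ∫_{ℝ³} |∇Φ(ξ + τ·(V − v))| · |∇Φ(ξ)| dξ dg(v) dτ ≤ (2C/a) (∫_{ℝ³} |∇Φ(ξ)| dξ) ∫_{ℝ³} dg(v)/|V − v| < ∞; in particular, the matrix-valued kernel K(V;τ) = ∫_{ℝ³} ∫_{ℝ³} ∇Φ(ξ + (V − v)τ) ⊗ ∇Φ(ξ) dg(v) dξ is defined for every τ and τ ↦ K(V;τ) is Bochner integrable on ℝ. -/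
/-!
Along the line `τ ↦ ξ + τ w` the point `ξ + τ w` is at distance at least `‖w‖ |τ - t₀|` from the
origin, where `t₀` is the time of closest approach, so the decay `|∇Φ(x)| ≤ C (1 + |x|)^{-(1+a)}`
gives `∫_ℝ |∇Φ(ξ + τ w)| dτ ≤ C ∫_ℝ (1 + |w| |τ - t₀|)^{-(1+a)} dτ = 2C / (a |w|)`.
Tonelli in `(τ, v, ξ)` with `w = V - v` yields the bound. Since `a > 2`, `∇Φ` is bounded and
integrable on `ℝ³`; the entries of `∇Φ(ξ + τ(V - v)) ⊗ ∇Φ(ξ)` are dominated by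
`|∇Φ(ξ + τ(V - v))| |∇Φ(ξ)|`, so the integrand is jointly integrable in `(τ, v, ξ)`, and Fubini
gives the integrability of `τ ↦ K(V;τ)`.
-/

open MeasureTheory Real Set Filter

section RealLine

variable {a : ℝ}

theorem integral_Ioi_one_add_rpow_neg (ha : 0 < a) :
    ∫ u in Ioi (0 : ℝ), (1 + u) ^ (-(1 + a)) = 1 / a := by
  have hderiv : ∀ u ∈ Ici (0 : ℝ),
      HasDerivAt (fun u : ℝ => -(1 + u) ^ (-a) / a) ((1 + u) ^ (-(1 + a))) u := by
    intro u hu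
    have hpos : (0 : ℝ) < 1 + u := by linarith [mem_Ici.1 hu]
    refine (((hasDerivAt_id u).const_add 1).rpow_const (p := -a)
      (Or.inl hpos.ne')).neg.div_const a |>.congr_deriv ?_
    rw [id, show -a - 1 = -(1 + a) by ring]
    field_simp
  have htendsto : Tendsto (fun u : ℝ => -(1 + u) ^ (-a) / a) atTop (nhds 0) := by
    simpa using ((tendsto_rpow_neg_atTop ha).comp
      (tendsto_atTop_add_const_left _ 1 tendsto_id)).neg.div_const a
  have hint : IntegrableOn (fun u : ℝ => (1 + u) ^ (-(1 + a))) (Ioi 0) :=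
    integrableOn_Ioi_deriv_of_nonneg' hderiv
      (fun u hu => rpow_nonneg (by linarith [mem_Ioi.1 hu]) _) htendsto
  rw [integral_Ioi_of_hasDerivAt_of_tendsto' hderiv hint htendsto]
  simp [neg_div]

theorem integrable_one_add_mul_abs_sub_rpow (ha : 0 < a) {b : ℝ} (hb : 0 < b) (c : ℝ) :
    Integrable (fun τ : ℝ => (1 + b * |τ - c|) ^ (-(1 + a))) := by
  have h := ((integrable_one_add_norm (E := ℝ) (r := 1 + a) (by simpa)).comp_mul_left'
    hb.ne').comp_sub_right c
  simpa [abs_mul, abs_of_pos hb] using h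

theorem integral_one_add_mul_abs_sub_rpow (ha : 0 < a) {b : ℝ} (hb : 0 < b) (c : ℝ) :
    ∫ τ : ℝ, (1 + b * |τ - c|) ^ (-(1 + a)) = 2 / (a * b) := by
  calc ∫ τ : ℝ, (1 + b * |τ - c|) ^ (-(1 + a))
      = ∫ τ : ℝ, (1 + |b * τ|) ^ (-(1 + a)) := by
        simp only [abs_mul, abs_of_pos hb]
        exact integral_sub_right_eq_self (fun t => (1 + b * |t|) ^ (-(1 + a))) c
    _ = b⁻¹ * ∫ t : ℝ, (1 + |t|) ^ (-(1 + a)) := by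
        rw [Measure.integral_comp_mul_left (fun t => (1 + |t|) ^ (-(1 + a))), smul_eq_mul,
          abs_of_pos (inv_pos.2 hb)]
    _ = 2 / (a * b) := by
        rw [integral_comp_abs (f := fun t => (1 + t) ^ (-(1 + a))),
          integral_Ioi_one_add_rpow_neg ha]
        field_simp

end RealLine

theorem exists_mul_abs_sub_le_norm_add_smul {E : Type*} [NormedAddCommGroup E]
    [InnerProductSpace ℝ E] (ξ w : E) : ∃ t₀ : ℝ, ∀ τ : ℝ, ‖w‖ * |τ - t₀| ≤ ‖ξ + τ • w‖ := by
  rcases eq_or_ne w 0 with rfl | hw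
  · exact ⟨0, fun τ => by simp⟩
  have hw' : 0 < ‖w‖ := norm_pos_iff.2 hw
  -- `t₀` is the time of closest approach to the origin
  refine ⟨-inner ℝ ξ w / ‖w‖ ^ 2, fun τ => ?_⟩
  have hinner : inner ℝ (ξ + τ • w) w = ‖w‖ ^ 2 * (τ - -inner ℝ ξ w / ‖w‖ ^ 2) := by
    rw [inner_add_left, real_inner_smul_left, real_inner_self_eq_norm_sq]
    field_simp
    ring
  have hcs := abs_real_inner_le_norm (ξ + τ • w) w
  rw [hinner, abs_mul, abs_of_nonneg (sq_nonneg _)] at hcs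
  nlinarith [abs_nonneg (τ - -inner ℝ ξ w / ‖w‖ ^ 2)]

def HasPowerDecay {E G : Type*} [Norm E] [Norm G] (F : E → G) (C a : ℝ) : Prop :=
  ∀ x, ‖F x‖ ≤ C * (1 + ‖x‖) ^ (-(1 + a))

namespace HasPowerDecay

variable {E G : Type*} [NormedAddCommGroup E] [NormedAddCommGroup G] {F : E → G} {C a : ℝ}

theorem nonneg (hF : HasPowerDecay F C a) : 0 ≤ C := by
  simpa using (norm_nonneg _).trans (hF 0)

theorem norm_le (hF : HasPowerDecay F C a) (ha : -1 ≤ a) (x : E) : ‖F x‖ ≤ C :=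
  (hF x).trans <| mul_le_of_le_one_right hF.nonneg <|
    rpow_le_one_of_one_le_of_nonpos (by linarith [norm_nonneg x]) (by linarith)

theorem integrable [NormedSpace ℝ E] [FiniteDimensional ℝ E] [MeasurableSpace E] [BorelSpace E]
    {μ : Measure E} [μ.IsAddHaarMeasure] (hF : HasPowerDecay F C a)
    (hm : AEStronglyMeasurable F μ) (hdim : (Module.finrank ℝ E : ℝ) < 1 + a) :
    Integrable F μ :=
  ((integrable_one_add_norm hdim).const_mul C).mono' hm (Eventually.of_forall hF)

theorem lintegral_norm_comp_add_smul_le [InnerProductSpace ℝ E] (hF : HasPowerDecay F C a)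
    (ha : 0 < a) (ξ w : E) :
    ∫⁻ τ : ℝ, ENNReal.ofReal ‖F (ξ + τ • w)‖
      ≤ ENNReal.ofReal (2 * C / a) * (ENNReal.ofReal ‖w‖)⁻¹ := by
  have hC := hF.nonneg
  -- for `w = 0` the right-hand side is `⊤` unless `C = 0`, in which case `F = 0`
  rcases eq_or_ne w 0 with rfl | hw
  · rcases hC.eq_or_lt with rfl | hC
    · have hF0 : ∀ x, F x = 0 := fun x => norm_le_zero_iff.1 (by simpa using hF x)
      simp [hF0]
    · simp [ENNReal.mul_top, hC, ha]
  have hw' : 0 < ‖w‖ := norm_pos_iff.2 hw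
  obtain ⟨t₀, ht₀⟩ := exists_mul_abs_sub_le_norm_add_smul ξ w
  have hbound (τ : ℝ) : ‖F (ξ + τ • w)‖ ≤ C * (1 + ‖w‖ * |τ - t₀|) ^ (-(1 + a)) :=
    (hF _).trans <| mul_le_mul_of_nonneg_left
      (rpow_le_rpow_of_nonpos (by positivity) (by linarith [ht₀ τ]) (by linarith)) hC
  calc ∫⁻ τ : ℝ, ENNReal.ofReal ‖F (ξ + τ • w)‖
      ≤ ∫⁻ τ : ℝ, ENNReal.ofReal (C * (1 + ‖w‖ * |τ - t₀|) ^ (-(1 + a))) :=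
        lintegral_mono fun τ => ENNReal.ofReal_le_ofReal (hbound τ)
    _ = ENNReal.ofReal (∫ τ : ℝ, C * (1 + ‖w‖ * |τ - t₀|) ^ (-(1 + a))) :=
        (ofReal_integral_eq_lintegral_ofReal
          ((integrable_one_add_mul_abs_sub_rpow ha hw' t₀).const_mul C)
          (Eventually.of_forall fun τ => by positivity)).symm
    _ = ENNReal.ofReal (2 * C / a) * (ENNReal.ofReal ‖w‖)⁻¹ := by
        rw [integral_const_mul, integral_one_add_mul_abs_sub_rpow ha hw',
          ← ENNReal.ofReal_inv_of_pos hw', ← ENNReal.ofReal_mul (by positivity)]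
        congr 1
        field_simp

variable [InnerProductSpace ℝ E] [MeasurableSpace E] [BorelSpace E] [SecondCountableTopology E]
  [MeasurableSpace G] [BorelSpace G]

theorem lintegral_lintegral_norm_mul_norm_le (hF : HasPowerDecay F C a) (hFm : Measurable F)
    (ha : 0 < a) (μ : Measure E) [SFinite μ] (w : E) :
    ∫⁻ τ : ℝ, ∫⁻ ξ, ENNReal.ofReal (‖F (ξ + τ • w)‖ * ‖F ξ‖) ∂μ
      ≤ ENNReal.ofReal (2 * C / a) * (∫⁻ ξ, ENNReal.ofReal ‖F ξ‖ ∂μ)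
          * (ENNReal.ofReal ‖w‖)⁻¹ := by
  rw [lintegral_lintegral_swap (by fun_prop)]
  calc ∫⁻ ξ, ∫⁻ τ : ℝ, ENNReal.ofReal (‖F (ξ + τ • w)‖ * ‖F ξ‖) ∂volume ∂μ
      = ∫⁻ ξ, (∫⁻ τ : ℝ, ENNReal.ofReal ‖F (ξ + τ • w)‖) * ENNReal.ofReal ‖F ξ‖ ∂μ := by
        refine lintegral_congr fun ξ => ?_
        simp_rw [ENNReal.ofReal_mul (norm_nonneg _)]
        exact lintegral_mul_const' _ _ ENNReal.ofReal_ne_top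
    _ ≤ ∫⁻ ξ, ENNReal.ofReal (2 * C / a) * (ENNReal.ofReal ‖w‖)⁻¹
          * ENNReal.ofReal ‖F ξ‖ ∂μ :=
        lintegral_mono fun ξ => by gcongr; exact hF.lintegral_norm_comp_add_smul_le ha ξ w
    _ = ENNReal.ofReal (2 * C / a) * (∫⁻ ξ, ENNReal.ofReal ‖F ξ‖ ∂μ)
          * (ENNReal.ofReal ‖w‖)⁻¹ := by
        rw [lintegral_const_mul _ (by fun_prop)]
        ring

theorem lintegral_lintegral_lintegral_norm_mul_norm_le (hF : HasPowerDecay F C a)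
    (hFm : Measurable F) (ha : 0 < a) (μ : Measure E) [SFinite μ] (g : Measure E) [SFinite g]
    (V : E) :
    ∫⁻ τ : ℝ, ∫⁻ v, ∫⁻ ξ, ENNReal.ofReal (‖F (ξ + τ • (V - v))‖ * ‖F ξ‖) ∂μ ∂g
      ≤ ENNReal.ofReal (2 * C / a) * (∫⁻ ξ, ENNReal.ofReal ‖F ξ‖ ∂μ)
          * ∫⁻ v, (ENNReal.ofReal ‖V - v‖)⁻¹ ∂g := by
  have hm : Measurable fun q : (ℝ × E) × E =>
      ENNReal.ofReal (‖F (q.2 + q.1.1 • (V - q.1.2))‖ * ‖F q.2‖) := by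
    fun_prop
  rw [lintegral_lintegral_swap hm.lintegral_prod_right'.aemeasurable]
  calc ∫⁻ v, ∫⁻ τ : ℝ, ∫⁻ ξ, ENNReal.ofReal (‖F (ξ + τ • (V - v))‖ * ‖F ξ‖) ∂μ ∂volume ∂g
      ≤ ∫⁻ v, ENNReal.ofReal (2 * C / a) * (∫⁻ ξ, ENNReal.ofReal ‖F ξ‖ ∂μ)
          * (ENNReal.ofReal ‖V - v‖)⁻¹ ∂g :=
        lintegral_mono fun v => hF.lintegral_lintegral_norm_mul_norm_le hFm ha μ (V - v)
    _ = _ := lintegral_const_mul _ (by fun_prop)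

end HasPowerDecay

section CorrelationKernel

variable {ι E : Type*} [NormedAddCommGroup E] [NormedSpace ℝ E] {F : E → EuclideanSpace ℝ ι}

/-- `∇Φ(ξ + τ(V - v)) ⊗ ∇Φ(ξ)` at `p = (v, ξ)`, for `F = ∇Φ`. -/
def correlationIntegrand (F : E → EuclideanSpace ℝ ι) (V : E) (τ : ℝ) (p : E × E) :
    ι → ι → ℝ :=
  fun i j => F (p.2 + τ • (V - p.1)) i * F p.2 j

theorem norm_correlationIntegrand_le [Fintype ι] (V : E) (τ : ℝ) (p : E × E) :
    ‖correlationIntegrand F V τ p‖ ≤ ‖F (p.2 + τ • (V - p.1))‖ * ‖F p.2‖ := by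
  refine (pi_norm_le_iff_of_nonneg (by positivity)).2 fun i =>
    (pi_norm_le_iff_of_nonneg (by positivity)).2 fun j => ?_
  rw [correlationIntegrand, norm_mul]
  exact mul_le_mul (PiLp.norm_apply_le _ i) (PiLp.norm_apply_le _ j) (norm_nonneg _)
    (norm_nonneg _)

variable [MeasurableSpace E] [BorelSpace E] [SecondCountableTopology E]

theorem measurable_correlationIntegrand (hFm : Measurable F) (V : E) :
    Measurable fun q : ℝ × E × E => correlationIntegrand F V q.1 q.2 := by
  unfold correlationIntegrand
  fun_prop

theorem integrable_correlationIntegrand [Fintype ι] (hFm : Measurable F) {M : ℝ}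
    (hM : ∀ x, ‖F x‖ ≤ M) {μ : Measure E} (hFμ : Integrable F μ) (g : Measure E)
    [IsFiniteMeasure g] (V : E) (τ : ℝ) :
    Integrable (correlationIntegrand F V τ) (g.prod μ) :=
  ((integrable_const M).mul_prod hFμ.norm).mono'
    ((measurable_correlationIntegrand hFm V).comp measurable_prodMk_left).aestronglyMeasurable
    (Eventually.of_forall fun p => (norm_correlationIntegrand_le V τ p).trans <|
      mul_le_mul_of_nonneg_right (hM _) (norm_nonneg _))

theorem integrable_integral_correlationIntegrand [Fintype ι] (hFm : Measurable F)
    (μ : Measure E) [SFinite μ] (g : Measure E) [SFinite g] (V : E)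
    (hfin : ∫⁻ τ : ℝ, ∫⁻ v, ∫⁻ ξ, ENNReal.ofReal (‖F (ξ + τ • (V - v))‖ * ‖F ξ‖) ∂μ ∂g < ⊤) :
    Integrable fun τ : ℝ => ∫ p, correlationIntegrand F V τ p ∂(g.prod μ) := by
  have hm := measurable_correlationIntegrand hFm V
  refine Integrable.integral_prod_left (f := fun q : ℝ × E × E => correlationIntegrand F V q.1 q.2)
    ⟨hm.aestronglyMeasurable, lt_of_le_of_lt ?_ hfin⟩
  rw [lintegral_prod _ hm.enorm.aemeasurable]
  refine lintegral_mono fun τ => ?_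
  have hmτ : Measurable (correlationIntegrand F V τ) := hm.comp measurable_prodMk_left
  rw [lintegral_prod _ hmτ.enorm.aemeasurable]
  refine lintegral_mono fun v => lintegral_mono fun ξ => ?_
  rw [← ofReal_norm]
  exact ENNReal.ofReal_le_ofReal (norm_correlationIntegrand_le V τ (v, ξ))

end CorrelationKernel

theorem correlation_kernel_time_integrable_general
    (Φ : EuclideanSpace ℝ (Fin 3) → ℝ)
    (C a : ℝ) (ha : 2 < a)
    (hdecay : ∀ x, ‖gradient Φ x‖ ≤ C * (1 + ‖x‖) ^ (-(1 + a)))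
    (g : Measure (EuclideanSpace ℝ (Fin 3))) [IsFiniteMeasure g]
    (V : EuclideanSpace ℝ (Fin 3))
    (hV : ∫⁻ v, (ENNReal.ofReal ‖v - V‖)⁻¹ ∂g < ⊤) :
    (∫⁻ τ : ℝ, ∫⁻ v, ∫⁻ ξ,
        ENNReal.ofReal (‖gradient Φ (ξ + τ • (V - v))‖ * ‖gradient Φ ξ‖) ∂volume ∂g)
      ≤ ENNReal.ofReal ((2 * C / a) * ∫ ξ, ‖gradient Φ ξ‖)
          * ∫⁻ v, (ENNReal.ofReal ‖V - v‖)⁻¹ ∂g ∧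
    (ENNReal.ofReal ((2 * C / a) * ∫ ξ, ‖gradient Φ ξ‖)
        * ∫⁻ v, (ENNReal.ofReal ‖V - v‖)⁻¹ ∂g) < ⊤ ∧
    (∀ τ : ℝ, Integrable
      (fun p : EuclideanSpace ℝ (Fin 3) × EuclideanSpace ℝ (Fin 3) =>
        fun i j : Fin 3 => gradient Φ (p.2 + τ • (V - p.1)) i * gradient Φ p.2 j)
      (g.prod volume)) ∧
    Integrable (fun τ : ℝ =>
      ∫ p : EuclideanSpace ℝ (Fin 3) × EuclideanSpace ℝ (Fin 3),
        (fun i j : Fin 3 => gradient Φ (p.2 + τ • (V - p.1)) i * gradient Φ p.2 j)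
        ∂(g.prod volume)) := by
  have hF : HasPowerDecay (gradient Φ) C a := hdecay
  have hFm : Measurable (gradient Φ) :=
    (InnerProductSpace.toDual ℝ _).symm.continuous.measurable.comp (measurable_fderiv ℝ Φ)
  have hFi : Integrable (gradient Φ) :=
    hF.integrable hFm.aestronglyMeasurable
      (by rw [finrank_euclideanSpace_fin]; push_cast; linarith)
  have hbound : (∫⁻ τ : ℝ, ∫⁻ v, ∫⁻ ξ,
        ENNReal.ofReal (‖gradient Φ (ξ + τ • (V - v))‖ * ‖gradient Φ ξ‖) ∂volume ∂g)
      ≤ ENNReal.ofReal ((2 * C / a) * ∫ ξ, ‖gradient Φ ξ‖)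
          * ∫⁻ v, (ENNReal.ofReal ‖V - v‖)⁻¹ ∂g := by
    rw [ENNReal.ofReal_mul (div_nonneg (by linarith [hF.nonneg]) (by linarith)),
      ofReal_integral_eq_lintegral_ofReal hFi.norm (.of_forall fun _ => norm_nonneg _)]
    exact hF.lintegral_lintegral_lintegral_norm_mul_norm_le hFm (by linarith) volume g V
  have hfinite : ENNReal.ofReal ((2 * C / a) * ∫ ξ, ‖gradient Φ ξ‖)
      * ∫⁻ v, (ENNReal.ofReal ‖V - v‖)⁻¹ ∂g < ⊤ :=
    ENNReal.mul_lt_top ENNReal.ofReal_lt_top (by simpa only [norm_sub_rev] using hV)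
  exact ⟨hbound, hfinite,
    integrable_correlationIntegrand hFm (hF.norm_le (by linarith)) hFi g V,
    integrable_integral_correlationIntegrand hFm volume g V (hbound.trans_lt hfinite)⟩

/-- Integrability in time of the force–force correlation kernel: for a `C¹` potential
with `|∇Φ(x)| ≤ C(1+|x|)^{-(1+a)}`, `a > 2`, and a finite Borel velocity measure `g`
with `∫ dg(v)/|v − V| < ∞`, one has
`∫_ℝ ∫∫ |∇Φ(ξ + τ(V−v))| |∇Φ(ξ)| dξ dg(v) dτ ≤ (2C/a)(∫|∇Φ|) ∫ dg(v)/|V−v| < ∞`;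
in particular the matrix kernel `K(V;τ) = ∫∫ ∇Φ(ξ+(V−v)τ) ⊗ ∇Φ(ξ) dg(v) dξ` is
defined for every `τ` and `τ ↦ K(V;τ)` is Bochner integrable on `ℝ`. -/
theorem correlation_kernel_time_integrable
    (Φ : EuclideanSpace ℝ (Fin 3) → ℝ) (hΦ : ContDiff ℝ 1 Φ)
    (C a : ℝ) (hC : 0 < C) (ha : 2 < a)
    (hdecay : ∀ x, ‖gradient Φ x‖ ≤ C * (1 + ‖x‖) ^ (-(1 + a)))
    (g : Measure (EuclideanSpace ℝ (Fin 3))) [IsFiniteMeasure g]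
    (V : EuclideanSpace ℝ (Fin 3))
    (hV : ∫⁻ v, (ENNReal.ofReal ‖v - V‖)⁻¹ ∂g < ⊤) :
    (∫⁻ τ : ℝ, ∫⁻ v, ∫⁻ ξ,
        ENNReal.ofReal (‖gradient Φ (ξ + τ • (V - v))‖ * ‖gradient Φ ξ‖) ∂volume ∂g)
      ≤ ENNReal.ofReal ((2 * C / a) * ∫ ξ, ‖gradient Φ ξ‖)
          * ∫⁻ v, (ENNReal.ofReal ‖V - v‖)⁻¹ ∂g ∧
    (ENNReal.ofReal ((2 * C / a) * ∫ ξ, ‖gradient Φ ξ‖)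
        * ∫⁻ v, (ENNReal.ofReal ‖V - v‖)⁻¹ ∂g) < ⊤ ∧
    (∀ τ : ℝ, Integrable
      (fun p : EuclideanSpace ℝ (Fin 3) × EuclideanSpace ℝ (Fin 3) =>
        fun i j : Fin 3 => gradient Φ (p.2 + τ • (V - p.1)) i * gradient Φ p.2 j)
      (g.prod volume)) ∧
    Integrable (fun τ : ℝ =>
      ∫ p : EuclideanSpace ℝ (Fin 3) × EuclideanSpace ℝ (Fin 3),
        (fun i j : Fin 3 => gradient Φ (p.2 + τ • (V - p.1)) i * gradient Φ p.2 j)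
        ∂(g.prod volume)) :=
  correlation_kernel_time_integrable_general Φ C a ha hdecay g V hV
end
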